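/- Along the fixed-point iterates β_{t+1} = T_n(β_t), for every q×p real matrix β it holds that G_n(β_{t+1}) ≤ G_n(β) + (1/2)(φ(β_t) − φ(β))ᵀ L_n(β_t)(φ(β_t) − φ(β)) − (1/2)(φ(β_{t+1}) − φ(β))ᵀ L_n(β_t)(φ(β_{t+1}) − φ(β)). -/

import Mathlib

open Matrix
open scoped BigOperators Kronecker

/-- Euclidean norm of a finite-dimensional real vector. -/
noncomputable def enorm2 {m : Type*} [Fintype m] (v : m → ℝ) : ℝ :=
  Real.sqrt (∑ i, v i ^ 2)

/-- Row-wise vectorization of a `q × p` matrix. -/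
def vecM {q p : ℕ} (B : Matrix (Fin q) (Fin p) ℝ) : Fin q × Fin p → ℝ :=
  fun ij => B ij.1 ij.2

/-- Empirical criterion `G_n(β) = (1/n) ∑ᵢ ‖Yᵢ − βXᵢ‖`. -/
noncomputable def Gn {p q n : ℕ} (X : Fin n → Fin p → ℝ) (Y : Fin n → Fin q → ℝ)
    (β : Matrix (Fin q) (Fin p) ℝ) : ℝ :=
  (n : ℝ)⁻¹ * ∑ i, enorm2 (Y i - β.mulVec (X i))

/-- Fixed point map `T_n(β) = (∑ᵢ YᵢXᵢᵀ/‖Yᵢ−βXᵢ‖)(∑ᵢ XᵢXᵢᵀ/‖Yᵢ−βXᵢ‖)⁻¹`. -/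
noncomputable def Tn {p q n : ℕ} (X : Fin n → Fin p → ℝ) (Y : Fin n → Fin q → ℝ)
    (β : Matrix (Fin q) (Fin p) ℝ) : Matrix (Fin q) (Fin p) ℝ :=
  (∑ i, (enorm2 (Y i - β.mulVec (X i)))⁻¹ • vecMulVec (Y i) (X i)) *
    (∑ i, (enorm2 (Y i - β.mulVec (X i)))⁻¹ • vecMulVec (X i) (X i))⁻¹

/-- `L_n(β) = I_q ⊗ (1/n) ∑ᵢ XᵢXᵢᵀ/‖Yᵢ−βXᵢ‖`. -/
noncomputable def Ln {p q n : ℕ} (X : Fin n → Fin p → ℝ) (Y : Fin n → Fin q → ℝ)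
    (β : Matrix (Fin q) (Fin p) ℝ) : Matrix (Fin q × Fin p) (Fin q × Fin p) ℝ :=
  (1 : Matrix (Fin q) (Fin q) ℝ) ⊗ₖ
    ((n : ℝ)⁻¹ • ∑ i, (enorm2 (Y i - β.mulVec (X i)))⁻¹ • vecMulVec (X i) (X i))

lemma enorm2_eq {m : Type*} [Fintype m] (v : m → ℝ) :
    enorm2 v = ‖(WithLp.equiv 2 (m → ℝ)).symm v‖ := by
  rw [EuclideanSpace.norm_eq]; simp [enorm2, sq_abs]

lemma enorm2_nonneg {m : Type*} [Fintype m] (v : m → ℝ) : 0 ≤ enorm2 v :=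
  Real.sqrt_nonneg _

lemma enorm2_sq {m : Type*} [Fintype m] (v : m → ℝ) : enorm2 v ^ 2 = ∑ i, v i ^ 2 := by
  rw [enorm2, Real.sq_sqrt]; positivity

lemma abs_enorm2_sub {m : Type*} [Fintype m] (a b : m → ℝ) :
    |enorm2 a - enorm2 b| ≤ enorm2 (a - b) := by
  rw [enorm2_eq a, enorm2_eq b, enorm2_eq (a - b)]
  exact abs_norm_sub_norm_le _ _

lemma vecMulVec_mulVec' {p : ℕ} (x y u : Fin p → ℝ) :
    (vecMulVec x y).mulVec u = (y ⬝ᵥ u) • x := by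
  ext j
  simp only [vecMulVec_apply, mulVec, dotProduct, Pi.smul_apply, smul_eq_mul, Finset.sum_mul,
    Finset.mul_sum]
  exact Finset.sum_congr rfl fun i _ => by ring

lemma kron_qf {q p : ℕ} (M : Matrix (Fin p) (Fin p) ℝ) (v : Fin q × Fin p → ℝ) :
    v ⬝ᵥ ((1 ⊗ₖ M).mulVec v)
      = ∑ k, (fun j => v (k, j)) ⬝ᵥ M.mulVec (fun j => v (k, j)) := by
  simp only [dotProduct, mulVec, Fintype.sum_prod_type, kroneckerMap_apply, one_apply,
    ite_mul, one_mul, zero_mul]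
  refine Finset.sum_congr rfl fun k _ => ?_
  refine Finset.sum_congr rfl fun j _ => ?_
  congr 1
  rw [Finset.sum_comm]
  simp

lemma sum_mulVec' {p n : ℕ} (A : Fin n → Matrix (Fin p) (Fin p) ℝ) (u : Fin p → ℝ) :
    (∑ i, A i).mulVec u = ∑ i, (A i).mulVec u := by
  ext j
  simp only [mulVec, dotProduct, Matrix.sum_apply, Finset.sum_apply, Finset.sum_mul]
  rw [Finset.sum_comm]

lemma dotProduct_sum' {p n : ℕ} (u : Fin p → ℝ) (f : Fin n → Fin p → ℝ) :
    u ⬝ᵥ (∑ i, f i) = ∑ i, u ⬝ᵥ f i := by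
  simp only [dotProduct, Finset.sum_apply, Finset.mul_sum]
  exact Finset.sum_comm

lemma qf_eq {q p n : ℕ} (X : Fin n → Fin p → ℝ) (c : Fin n → ℝ) (v : Fin q × Fin p → ℝ) :
    v ⬝ᵥ ((1 ⊗ₖ ((n:ℝ)⁻¹ • ∑ i, c i • vecMulVec (X i) (X i))).mulVec v)
      = (n:ℝ)⁻¹ * ∑ i, c i * ∑ k, ((fun j => v (k, j)) ⬝ᵥ X i) ^ 2 := by
  rw [kron_qf]
  have h1 : ∀ k : Fin q,
      (fun j => v (k, j)) ⬝ᵥ ((((n:ℝ)⁻¹ • ∑ i, c i • vecMulVec (X i) (X i))).mulVec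
        (fun j => v (k, j)))
      = (n:ℝ)⁻¹ * ∑ i, c i * ((fun j => v (k, j)) ⬝ᵥ X i) ^ 2 := by
    intro k
    rw [smul_mulVec, sum_mulVec']
    simp only [smul_mulVec, vecMulVec_mulVec']
    rw [dotProduct_smul, smul_eq_mul, dotProduct_sum', Finset.mul_sum]
    simp only [dotProduct_smul, smul_eq_mul, Finset.mul_sum]
    refine Finset.sum_congr rfl fun i _ => ?_
    rw [dotProduct_comm ((fun j => v (k, j))) (X i)]
    ring
  simp only [h1, Finset.mul_sum]
  rw [Finset.sum_comm]

lemma normal_eq {q p n : ℕ} (X : Fin n → Fin p → ℝ) (Y : Fin n → Fin q → ℝ)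
    (w : Fin n → ℝ)
    (hU : IsUnit (∑ i, w i • vecMulVec (X i) (X i)))
    (B' : Matrix (Fin q) (Fin p) ℝ)
    (hB' : B' = (∑ i, w i • vecMulVec (Y i) (X i)) *
      (∑ i, w i • vecMulVec (X i) (X i))⁻¹) :
    ∀ k j, ∑ i, w i * ((Y i k - B'.mulVec (X i) k) * X i j) = 0 := by
  have hMN : B' * (∑ i, w i • vecMulVec (X i) (X i))
      = ∑ i, w i • vecMulVec (Y i) (X i) := by
    rw [hB', Matrix.mul_assoc,
      Matrix.nonsing_inv_mul _ ((Matrix.isUnit_iff_isUnit_det _).mp hU), Matrix.mul_one]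
  intro k j
  have h1 := congrArg (fun A => A k j) hMN
  simp only [Matrix.mul_apply, Matrix.sum_apply, Matrix.smul_apply, vecMulVec_apply,
    smul_eq_mul] at h1
  have h2 : ∑ l, B' k l * ∑ i, w i * (X i l * X i j)
      = ∑ i, w i * (B'.mulVec (X i) k * X i j) := by
    simp only [Finset.mul_sum, mulVec, dotProduct, Finset.sum_mul]
    rw [Finset.sum_comm]
    refine Finset.sum_congr rfl fun i _ => Finset.sum_congr rfl fun l _ => by ring
  rw [h2] at h1
  have : ∑ i, w i * ((Y i k - B'.mulVec (X i) k) * X i j)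
      = ∑ i, w i * (Y i k * X i j) - ∑ i, w i * (B'.mulVec (X i) k * X i j) := by
    rw [← Finset.sum_sub_distrib]
    exact Finset.sum_congr rfl fun i _ => by ring
  rw [this, ← h1, sub_eq_zero]

lemma cross_zero {q p n : ℕ} (X : Fin n → Fin p → ℝ) (Y : Fin n → Fin q → ℝ)
    (w : Fin n → ℝ)
    (hU : IsUnit (∑ i, w i • vecMulVec (X i) (X i)))
    (B' β : Matrix (Fin q) (Fin p) ℝ)
    (hB' : B' = (∑ i, w i • vecMulVec (Y i) (X i)) *
      (∑ i, w i • vecMulVec (X i) (X i))⁻¹) :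
    ∑ i, w i * ∑ k, (Y i k - B'.mulVec (X i) k) * ((B' - β).mulVec (X i) k) = 0 := by
  have key := normal_eq X Y w hU B' hB'
  have swap : ∀ (F : Fin n → Fin q → Fin p → ℝ),
      ∑ i, ∑ k, ∑ j, F i k j = ∑ k, ∑ j, ∑ i, F i k j := by
    intro F
    rw [Finset.sum_comm]
    exact Finset.sum_congr rfl fun k _ => Finset.sum_comm
  have expand : ∑ i, w i * ∑ k, (Y i k - B'.mulVec (X i) k) * ((B' - β).mulVec (X i) k)
      = ∑ i, ∑ k, ∑ j, w i * ((Y i k - B'.mulVec (X i) k) * X i j) * (B' - β) k j := by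
    refine Finset.sum_congr rfl fun i _ => ?_
    rw [Finset.mul_sum]
    refine Finset.sum_congr rfl fun k _ => ?_
    have : (B' - β).mulVec (X i) k = ∑ j, (B' - β) k j * X i j := rfl
    rw [this, Finset.mul_sum, Finset.mul_sum]
    exact Finset.sum_congr rfl fun j _ => by ring
  rw [expand, swap]
  refine Finset.sum_eq_zero fun k _ => Finset.sum_eq_zero fun j _ => ?_
  rw [← Finset.sum_mul, key k j, zero_mul]

lemma main_aux {p q n : ℕ} (X : Fin n → Fin p → ℝ) (Y : Fin n → Fin q → ℝ)
    (Bt B' β : Matrix (Fin q) (Fin p) ℝ)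
    (hU : IsUnit (∑ i, (enorm2 (Y i - Bt.mulVec (X i)))⁻¹ • vecMulVec (X i) (X i)))
    (hB' : B' = Tn X Y Bt)
    (hpos : ∀ i, 0 < enorm2 (Y i - Bt.mulVec (X i))) :
    Gn X Y B' ≤ Gn X Y β
      + (1 / 2) * ((vecM Bt - vecM β) ⬝ᵥ (Ln X Y Bt).mulVec (vecM Bt - vecM β))
      - (1 / 2) * ((vecM B' - vecM β) ⬝ᵥ (Ln X Y Bt).mulVec (vecM B' - vecM β)) := by
  classical
  -- notation
  set u : Fin n → ℝ := fun i => enorm2 (Y i - Bt.mulVec (X i)) with hu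
  set a : Fin n → ℝ := fun i => enorm2 (Y i - B'.mulVec (X i)) with ha
  set g : Fin n → ℝ := fun i => enorm2 (Y i - β.mulVec (X i)) with hg
  -- quadratic forms
  have hQF : ∀ A : Matrix (Fin q) (Fin p) ℝ,
      (vecM A - vecM β) ⬝ᵥ (Ln X Y Bt).mulVec (vecM A - vecM β)
        = (n:ℝ)⁻¹ * ∑ i, (u i)⁻¹ * ∑ k, ((A - β).mulVec (X i) k) ^ 2 := by
    intro A
    rw [Ln, qf_eq]
    rfl
  rw [hQF Bt, hQF B']
  -- unfold Gn
  rw [Gn, Gn]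
  set P : Fin n → ℝ := fun i => ∑ k, ((Bt - β).mulVec (X i) k) ^ 2 with hP
  set Q : Fin n → ℝ := fun i => ∑ k, ((B' - β).mulVec (X i) k) ^ 2 with hQ
  -- key identity
  have hiden : ∑ i, (u i)⁻¹ * (a i)^2 + ∑ i, (u i)⁻¹ * Q i = ∑ i, (u i)⁻¹ * (g i)^2 := by
    have hc := cross_zero X Y (fun i => (u i)⁻¹) hU B' β (by rw [hB', Tn])
    have hsq : ∀ i, (g i)^2 = (a i)^2
        + 2 * (∑ k, (Y i k - B'.mulVec (X i) k) * ((B' - β).mulVec (X i) k)) + Q i := by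
      intro i
      rw [hg, ha, enorm2_sq, enorm2_sq]
      simp only [hQ]
      rw [Finset.mul_sum, ← Finset.sum_add_distrib, ← Finset.sum_add_distrib]
      refine Finset.sum_congr rfl fun k _ => ?_
      have hd : (B' - β).mulVec (X i) k = B'.mulVec (X i) k - β.mulVec (X i) k := by
        rw [Matrix.sub_mulVec]; rfl
      simp only [Pi.sub_apply, hd]
      ring
    calc ∑ i, (u i)⁻¹ * (a i)^2 + ∑ i, (u i)⁻¹ * Q i
        = ∑ i, (u i)⁻¹ * ((a i)^2
            + 2 * (∑ k, (Y i k - B'.mulVec (X i) k) * ((B' - β).mulVec (X i) k)) + Q i)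
          - 2 * ∑ i, (u i)⁻¹ * ∑ k, (Y i k - B'.mulVec (X i) k) * ((B' - β).mulVec (X i) k) := by
          rw [Finset.mul_sum, ← Finset.sum_sub_distrib, ← Finset.sum_add_distrib]
          exact Finset.sum_congr rfl fun i _ => by ring
      _ = ∑ i, (u i)⁻¹ * (g i)^2 := by
          rw [hc]
          simp only [mul_zero, sub_zero]
          exact Finset.sum_congr rfl fun i _ => by rw [← hsq i]
  -- per-index bounds and combination
  have hPb : ∀ i, (g i - u i)^2 ≤ P i := by
    intro i
    have h1 : |g i - u i| ≤ enorm2 ((Bt - β).mulVec (X i)) := by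
      have hdiff : (Y i - β.mulVec (X i)) - (Y i - Bt.mulVec (X i))
          = (Bt - β).mulVec (X i) := by
        funext k
        simp only [Pi.sub_apply, Matrix.sub_mulVec]
        ring
      have := abs_enorm2_sub (Y i - β.mulVec (X i)) (Y i - Bt.mulVec (X i))
      rwa [hdiff] at this
    have h2 : (g i - u i)^2 ≤ (enorm2 ((Bt - β).mulVec (X i)))^2 := by
      rw [← sq_abs (g i - u i)]
      exact pow_le_pow_left₀ (abs_nonneg _) h1 2
    calc (g i - u i)^2 ≤ (enorm2 ((Bt - β).mulVec (X i)))^2 := h2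
      _ = P i := by rw [enorm2_sq]
  have main : ∑ i, a i + (1/2) * ∑ i, (u i)⁻¹ * Q i
      ≤ ∑ i, g i + (1/2) * ∑ i, (u i)⁻¹ * P i := by
    have s1 : ∀ i, a i ≤ ((u i)⁻¹ * (a i)^2 + u i) / 2 := by
      intro i
      have h0 := hpos i
      have e : (u i)⁻¹ * (a i - u i)^2 = (u i)⁻¹ * (a i)^2 - 2 * a i + u i := by
        linear_combination (u i - 2 * a i) * mul_inv_cancel₀ (h0.ne' : u i ≠ 0)
      nlinarith [mul_nonneg (inv_nonneg.2 h0.le) (sq_nonneg (a i - u i))]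
    have s2 : ∀ i, (u i)⁻¹ * (g i)^2 + u i ≤ 2 * g i + (u i)⁻¹ * P i := by
      intro i
      have h0 := hpos i
      have e : (u i)⁻¹ * (g i - u i)^2 = (u i)⁻¹ * (g i)^2 - 2 * g i + u i := by
        linear_combination (u i - 2 * g i) * mul_inv_cancel₀ (h0.ne' : u i ≠ 0)
      have h1 : (u i)⁻¹ * (g i - u i)^2 ≤ (u i)⁻¹ * P i :=
        mul_le_mul_of_nonneg_left (hPb i) (inv_nonneg.2 h0.le)
      linarith
    have S1 : ∑ i, a i ≤ (∑ i, (u i)⁻¹ * (a i)^2 + ∑ i, u i) / 2 := by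
      calc ∑ i, a i ≤ ∑ i, ((u i)⁻¹ * (a i)^2 + u i) / 2 := Finset.sum_le_sum fun i _ => s1 i
        _ = (∑ i, (u i)⁻¹ * (a i)^2 + ∑ i, u i) / 2 := by
            rw [← Finset.sum_add_distrib, ← Finset.sum_div]
    have S2 : ∑ i, (u i)⁻¹ * (g i)^2 + ∑ i, u i ≤ 2 * ∑ i, g i + ∑ i, (u i)⁻¹ * P i := by
      have := Finset.sum_le_sum (f := fun i => (u i)⁻¹ * (g i)^2 + u i)
        (g := fun i => 2 * g i + (u i)⁻¹ * P i) (s := Finset.univ) fun i _ => s2 i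
      simpa [Finset.sum_add_distrib, Finset.mul_sum] using this
    linarith
  have hn : (0:ℝ) ≤ (n:ℝ)⁻¹ := by positivity
  nlinarith [mul_le_mul_of_nonneg_left main hn]


/-- Lemma 4 of the paper: along the fixed-point iterates
`β_{t+1} = T_n(β_t)`, for every matrix `β` a three-point descent inequality holds. -/
theorem statement13 {p q n : ℕ}
    (X : Fin n → Fin p → ℝ) (Y : Fin n → Fin q → ℝ)
    (hinv : ∀ β : Matrix (Fin q) (Fin p) ℝ,
      IsUnit (∑ i, (enorm2 (Y i - β.mulVec (X i)))⁻¹ • vecMulVec (X i) (X i)))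
    (B : ℕ → Matrix (Fin q) (Fin p) ℝ)
    (hrec : ∀ t, B (t + 1) = Tn X Y (B t))
    (hpos : ∀ t i, 0 < enorm2 (Y i - (B t).mulVec (X i))) :
    ∀ (t : ℕ) (β : Matrix (Fin q) (Fin p) ℝ),
      Gn X Y (B (t + 1)) ≤ Gn X Y β
        + (1 / 2) * ((vecM (B t) - vecM β) ⬝ᵥ
            (Ln X Y (B t)).mulVec (vecM (B t) - vecM β))
        - (1 / 2) * ((vecM (B (t + 1)) - vecM β) ⬝ᵥ
            (Ln X Y (B t)).mulVec (vecM (B (t + 1)) - vecM β)) := by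
  intro t β
  exact main_aux X Y (B t) (B (t + 1)) β (hinv (B t)) (hrec t) (hpos t)
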